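/- For an element g of a k-peg Hanoi group G with generating set S, the following are equivalent: (1) g|_j = g for some j ∈ X_k; (2) some representation of g has nonempty essential set; (3) every minimal representation of g has nonempty essential set. Moreover, the prenucleus of G (the set of all g satisfying these conditions) is state-closed: if g lies in the prenucleus then g|_j lies in the prenucleus for every j ∈ X_k. -/

import Mathlib

/-!
Common framework: automorphisms of the rooted tree `X_k^*`, root permutations,
sections, self-similar and contracting groups, Hanoi automorphisms and Hanoi
groups, following Makisumi–Stadnyk–Steinhurst, "Modified Hanoi Towers Groups
and Limit Spaces".

A word `x_n … x_1` over the alphabet `X_k = Fin k` is encoded as the list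
`[x_n, …, x_1]`, whose head `x_n` is the first letter, i.e. the letter that a
tree automorphism reads (and permutes) first.
-/

namespace Hanoi

/-- Words over the alphabet `X_k = Fin k`. -/
abbrev Word (k : ℕ) := List (Fin k)

/-- `e` is an automorphism of the rooted tree `X_k^*`: it fixes the root
(the empty word), preserves word length (levels) and preserves the tree
structure (words sharing an initial segment of length `n` are sent to words
sharing an initial segment of length `n`). -/
def IsTreeAut {k : ℕ} (e : Equiv.Perm (Word k)) : Prop :=
  (∀ w : Word k, (e w).length = w.length) ∧
    ∀ (w v : Word k) (n : ℕ), w.take n = v.take n → (e w).take n = (e v).take n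

open Classical in
/-- The root permutation `σ_e` of a tree automorphism `e` (its action on
one-letter words). -/
noncomputable def rootPerm {k : ℕ} (e : Equiv.Perm (Word k)) : Equiv.Perm (Fin k) :=
  if h : Function.Bijective (fun x : Fin k => ((e [x]).head?.getD x)) then
    Equiv.ofBijective _ h
  else 1

open Classical in
/-- The section `e|_x` of `e` at a letter `x`: the unique automorphism with
`e (x :: w) = σ_e x :: (e|_x) w` for all words `w`. -/
noncomputable def sec {k : ℕ} (e : Equiv.Perm (Word k)) (x : Fin k) : Equiv.Perm (Word k) :=
  if h : Function.Bijective (fun w : Word k => (e (x :: w)).tail) then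
    Equiv.ofBijective _ h
  else 1

/-- The section `e|_v` of `e` at a word `v = x_n … x_1`, defined by
`e|_v = (e|_{x_n})|_{x_{n-1} … x_1}`. -/
noncomputable def secW {k : ℕ} (e : Equiv.Perm (Word k)) : Word k → Equiv.Perm (Word k)
  | [] => e
  | x :: v => secW (sec e x) v

/-- A subgroup of the permutations of `X_k^*` is self-similar if it consists of
tree automorphisms and is closed under taking sections. -/
def IsSelfSimilar {k : ℕ} (G : Subgroup (Equiv.Perm (Word k))) : Prop :=
  (∀ g ∈ G, IsTreeAut g) ∧ ∀ g ∈ G, ∀ x : Fin k, sec g x ∈ G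

/-- A self-similar group `G` is contracting if there is a finite subset `N ⊆ G`
such that for every `g ∈ G` all sections of `g` at words of length at least
some `m` lie in `N`. -/
def IsContracting {k : ℕ} (G : Subgroup (Equiv.Perm (Word k))) : Prop :=
  ∃ N : Set (Equiv.Perm (Word k)), N.Finite ∧ N ⊆ (G : Set (Equiv.Perm (Word k))) ∧
    ∀ g ∈ G, ∃ m : ℕ, ∀ v : Word k, m ≤ v.length → secW g v ∈ N

/-- `N` is the nucleus of `G`: a smallest finite subset of `G` catching all
deep enough sections of every element of `G`. -/
def IsNucleus {k : ℕ} (G : Subgroup (Equiv.Perm (Word k)))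
    (N : Set (Equiv.Perm (Word k))) : Prop :=
  (N.Finite ∧ N ⊆ (G : Set (Equiv.Perm (Word k))) ∧
    ∀ g ∈ G, ∃ m : ℕ, ∀ v : Word k, m ≤ v.length → secW g v ∈ N) ∧
  ∀ N' : Set (Equiv.Perm (Word k)), N'.Finite → N' ⊆ (G : Set (Equiv.Perm (Word k))) →
    (∀ g ∈ G, ∃ m : ℕ, ∀ v : Word k, m ≤ v.length → secW g v ∈ N') → N ⊆ N'

/-- `a` is a Hanoi automorphism with set of inactive pegs `Q`: the section at
each active peg (element of the complement of `Q`) is trivial, the section at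
each inactive peg is `a` itself, and the root permutation fixes each inactive
peg. -/
def IsHanoiWith {k : ℕ} (a : Equiv.Perm (Word k)) (Q : Set (Fin k)) : Prop :=
  IsTreeAut a ∧ (∀ i ∉ Q, sec a i = 1) ∧ (∀ j ∈ Q, sec a j = a) ∧
    ∀ j ∈ Q, rootPerm a j = j

/-- `a` is a `k`-peg Hanoi automorphism. -/
def IsHanoiAut {k : ℕ} (a : Equiv.Perm (Word k)) : Prop := ∃ Q, IsHanoiWith a Q

open Classical in
/-- The set `Q_a` of inactive pegs of a Hanoi automorphism `a`; by convention
`Q_1 = X_k` (for `a ≠ 1` the set of inactive pegs is uniquely determined). -/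
noncomputable def inactivePegs {k : ℕ} (a : Equiv.Perm (Word k)) : Set (Fin k) :=
  if a = 1 then Set.univ
  else if h : ∃ Q, IsHanoiWith a Q then h.choose else ∅

/-- `S_{k,q}`: the set of Hanoi automorphisms over `X_k` with exactly `q`
inactive pegs. -/
noncomputable def hanoiSet (k q : ℕ) : Set (Equiv.Perm (Word k)) :=
  {a | IsHanoiAut a ∧ (inactivePegs a).ncard = q}

/-- `L = [s_n, …, s_1]` is a representation of `g` over the generating set `S`:
each `s_i ∈ S ∪ S⁻¹` and `g = s_n ⋯ s_2 s_1`. -/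
def IsRepOf {k : ℕ} (S : Set (Equiv.Perm (Word k))) (L : List (Equiv.Perm (Word k)))
    (g : Equiv.Perm (Word k)) : Prop :=
  (∀ s ∈ L, s ∈ S ∨ s⁻¹ ∈ S) ∧ L.prod = g

/-- The length `l(g)` of `g` with respect to `S`: the length of a minimal
representation (`0` for the identity). -/
noncomputable def repLength {k : ℕ} (S : Set (Equiv.Perm (Word k)))
    (g : Equiv.Perm (Word k)) : ℕ :=
  sInf {n | ∃ L, IsRepOf S L g ∧ L.length = n}

/-- The essential set of a representation: the intersection of the sets of
inactive pegs of its letters. -/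
noncomputable def essSet {k : ℕ} (L : List (Equiv.Perm (Word k))) : Set (Fin k) :=
  ⋂ s ∈ L, inactivePegs s

/-- The prenucleus of `G`: the set of elements `g ∈ G` with `g|_j = g` for some
letter `j`. -/
noncomputable def preNucleus {k : ℕ} (G : Subgroup (Equiv.Perm (Word k))) :
    Set (Equiv.Perm (Word k)) :=
  {g | g ∈ G ∧ ∃ j : Fin k, sec g j = g}

/-- The underlying function of the Hanoi Towers move `a_{ij}`: it changes the
first occurrence of `i` or `j` in a word by means of the transposition `(i j)`
and leaves the rest of the word unchanged. -/
def hanoiMoveFun {k : ℕ} (i j : Fin k) : Word k → Word k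
  | [] => []
  | x :: w => if x = i ∨ x = j then Equiv.swap i j x :: w else x :: hanoiMoveFun i j w

theorem hanoiMoveFun_involutive {k : ℕ} (i j : Fin k) :
    Function.Involutive (hanoiMoveFun i j) := by
  intro w
  induction w with
  | nil => rfl
  | cons x t ih =>
    by_cases h : x = i ∨ x = j
    · have h2 : Equiv.swap i j x = i ∨ Equiv.swap i j x = j := by
        rcases h with h | h <;> subst h <;> simp
      simp only [hanoiMoveFun, if_pos h, if_pos h2, Equiv.swap_apply_self]
    · simp only [hanoiMoveFun, if_neg h, ih]

/-- The Hanoi Towers move `a_{ij}`, as a permutation of `X_k^*`: its root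
permutation is the transposition `(i j)`, its sections at `i` and `j` are
trivial and all its other sections equal `a_{ij}` itself. -/
def hanoiMove {k : ℕ} (i j : Fin k) : Equiv.Perm (Word k) :=
  (hanoiMoveFun_involutive i j).toPerm

/-- The orbit of the letter `j` under the subgroup of `Sym(X_k)` generated by
the root permutations of the elements of `T`. -/
noncomputable def orbT {k : ℕ} (T : Finset (Equiv.Perm (Word k))) (j : Fin k) : Set (Fin k) :=
  MulAction.orbit (Subgroup.closure ((fun a => rootPerm a) '' (T : Set (Equiv.Perm (Word k))))) j

/-- The set `Fix(T)` of letters fixed by the root permutation of every element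
of `T`. -/
noncomputable def fixT {k : ℕ} (T : Finset (Equiv.Perm (Word k))) : Set (Fin k) :=
  {x | ∀ s ∈ T, rootPerm s x = x}

/-- Condition (*) on a generating set `S` of Hanoi automorphisms: for every
finite `T ⊆ S` with nonempty essential set and every letter `j ∉ Fix(T)`,
the orbit of `j` misses the inactive pegs of some element of `T`. -/
noncomputable def CondStar {k : ℕ} (S : Set (Equiv.Perm (Word k))) : Prop :=
  ∀ T : Finset (Equiv.Perm (Word k)), (T : Set (Equiv.Perm (Word k))) ⊆ S →
    (⋂ s ∈ T, inactivePegs s).Nonempty →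
    ∀ j : Fin k, j ∉ fixT T →
      ∃ s ∈ T, orbT T j ∩ inactivePegs s = ∅

open Classical in
/-- `d(g)`: the least number of distinct generators occurring among all
representations of `g` having nonempty essential set. -/
noncomputable def dCount {k : ℕ} (S : Set (Equiv.Perm (Word k)))
    (g : Equiv.Perm (Word k)) : ℕ :=
  sInf {M | ∃ L, IsRepOf S L g ∧ (essSet L).Nonempty ∧ L.toFinset.card = M}

/-- `S` is fully symmetric: for every non-identity `a ∈ S` and every
`φ ∈ Sym(X_k)`, the Hanoi automorphism `φ·a` with inactive pegs `φ(Q_a)` and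
root permutation `φ ∘ σ_a ∘ φ⁻¹` again lies in `S`. -/
noncomputable def FullySymmetric {k : ℕ} (S : Set (Equiv.Perm (Word k))) : Prop :=
  ∀ a ∈ S, a ≠ 1 → ∀ φ : Equiv.Perm (Fin k), ∀ b : Equiv.Perm (Word k),
    IsHanoiWith b (φ '' inactivePegs a) →
    rootPerm b = φ * rootPerm a * φ⁻¹ → b ∈ S

/-- The family `R̲_{k,n}`: the identity together with all Hanoi automorphisms
`a` such that (1) `Q_a ⊆ {m+1, …, m+n}` for some `m`, and (2) whenever
`i ∈ Q_a` the root permutation of `a` fixes `i-1, …, i-(n-1)`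
(all peg labels mod `k`). -/
noncomputable def Runder (k n : ℕ) : Set (Equiv.Perm (Word k)) :=
  {a | a = 1 ∨ (IsHanoiAut a ∧
    (∃ m : Fin k, ∀ q ∈ inactivePegs a, ∃ t : ℕ, 1 ≤ t ∧ t ≤ n ∧
      (q : ℕ) = ((m : ℕ) + t) % k) ∧
    ∀ i ∈ inactivePegs a, ∀ x : Fin k, ∀ t : ℕ, 1 ≤ t → t ≤ n - 1 →
      ((x : ℕ) + t) % k = (i : ℕ) → rootPerm a x = x)}

/-- The family `R̄_{k,n}`: the identity together with all Hanoi automorphisms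
`a` such that (1) `Q_a ⊆ {m+1, …, m+n}` for some `m`, and (2) whenever
`i ∈ Q_a` the root permutation of `a` fixes `i+1, …, i+(n-1)`
(all peg labels mod `k`). -/
noncomputable def Rover (k n : ℕ) : Set (Equiv.Perm (Word k)) :=
  {a | a = 1 ∨ (IsHanoiAut a ∧
    (∃ m : Fin k, ∀ q ∈ inactivePegs a, ∃ t : ℕ, 1 ≤ t ∧ t ≤ n ∧
      (q : ℕ) = ((m : ℕ) + t) % k) ∧
    ∀ i ∈ inactivePegs a, ∀ x : Fin k, ∀ t : ℕ, 1 ≤ t → t ≤ n - 1 →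
      (x : ℕ) = ((i : ℕ) + t) % k → rootPerm a x = x)}

/-- The finite word `x_m … x_1` (first letter `x_m`) read off from a
left-infinite sequence `… x_2 x_1`, encoded as `x : ℕ → Fin k` with
`x s = x_{s+1}`. -/
def wordOf {k : ℕ} (x : ℕ → Fin k) (m : ℕ) : Word k := (List.range m).reverse.map x

/-!
For a product `g = s_n ⋯ s_1` of Hanoi automorphisms, the section `g|_x` is the product of
those factors `s_i` that are inactive at the letter to which `s_{i-1} ⋯ s_1` moves `x`: every
other factor has trivial section there. So `g|_x` is represented by a subword of `s_n ⋯ s_1`,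
and if this subword is the whole word, every factor is inactive at `x` itself, i.e. `x` lies
in the essential set. Conversely, along the essential set all root permutations fix `x` and
all sections are the factors themselves, so `g|_x = g`. For a minimal representation of `g`,
`g|_x = g` forces the subword to be the whole word. State-closure follows because the subword
representing `g|_j` keeps the (nonempty) essential set of a minimal representation of `g`.
-/

variable {k : ℕ}

namespace IsTreeAut

variable {e f : Equiv.Perm (Word k)}

theorem apply_take (he : IsTreeAut e) (w : Word k) (n : ℕ) :
    e (w.take n) = (e w).take n := by
  rw [← he.2 (w.take n) w n (by simp)]
  exact (List.take_of_length_le (by rw [he.1]; exact List.length_take_le n w)).symm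

theorem of_apply_take (hlen : ∀ w, (e w).length = w.length)
    (htake : ∀ w n, e (w.take n) = (e w).take n) : IsTreeAut e :=
  ⟨hlen, fun w v n h => by rw [← htake, ← htake, h]⟩

theorem one : IsTreeAut (1 : Equiv.Perm (Word k)) :=
  ⟨fun _ => rfl, fun _ _ _ h => h⟩

theorem mul (he : IsTreeAut e) (hf : IsTreeAut f) : IsTreeAut (e * f) :=
  ⟨fun w => (he.1 _).trans (hf.1 w), fun _ _ n h => he.2 _ _ n (hf.2 _ _ n h)⟩

theorem inv (he : IsTreeAut e) : IsTreeAut e⁻¹ := by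
  have hlen : ∀ w, (e⁻¹ w).length = w.length := fun w => by
    rw [← he.1, Equiv.Perm.coe_inv, Equiv.apply_symm_apply]
  refine of_apply_take hlen fun w n => e.injective ?_
  rw [he.apply_take]
  simp only [Equiv.Perm.coe_inv, Equiv.apply_symm_apply]

theorem list_prod {L : List (Equiv.Perm (Word k))} (hL : ∀ s ∈ L, IsTreeAut s) :
    IsTreeAut L.prod := by
  induction L with
  | nil => exact one
  | cons s L ih =>
    rw [List.forall_mem_cons] at hL
    exact hL.1.mul (ih hL.2)

theorem apply_singleton_eq_head (he : IsTreeAut e) (x : Fin k) :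
    e [x] = [(e [x]).head?.getD x] := by
  obtain ⟨a, ha⟩ := List.length_eq_one_iff.mp (he.1 [x])
  rw [ha]
  rfl

theorem apply_singleton (he : IsTreeAut e) (x : Fin k) : e [x] = [rootPerm e x] := by
  have hinj : Function.Injective fun x : Fin k => (e [x]).head?.getD x := by
    intro x y hxy
    have h := he.apply_singleton_eq_head x
    rw [show (e [x]).head?.getD x = (e [y]).head?.getD y from hxy,
      ← he.apply_singleton_eq_head y] at h
    simpa using e.injective h
  rw [rootPerm, dif_pos (Finite.injective_iff_bijective.mp hinj)]
  exact he.apply_singleton_eq_head x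

theorem apply_cons_eq_cons_tail (he : IsTreeAut e) (x : Fin k) (w : Word k) :
    e (x :: w) = rootPerm e x :: (e (x :: w)).tail := by
  have hhead : (e (x :: w)).take 1 = [rootPerm e x] := by
    rw [← he.apply_take, ← he.apply_singleton]
    rfl
  obtain ⟨y, v, hyv⟩ := List.exists_cons_of_length_pos (l := e (x :: w)) (by simp [he.1])
  rw [hyv] at hhead ⊢
  rw [List.take_succ_cons, List.take_zero, List.cons.injEq] at hhead
  rw [hhead.1]
  rfl

theorem sec_apply (he : IsTreeAut e) (x : Fin k) (w : Word k) :
    sec e x w = (e (x :: w)).tail := by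
  have hbij : Function.Bijective fun w : Word k => (e (x :: w)).tail := by
    refine ⟨fun w v hwv => ?_, fun u => ?_⟩
    · have h : e (x :: w) = e (x :: v) := by
        rw [he.apply_cons_eq_cons_tail x w, he.apply_cons_eq_cons_tail x v]
        exact congrArg _ hwv
      simpa using e.injective h
    · obtain ⟨y, v, hyv⟩ := List.exists_cons_of_length_pos
        (l := e⁻¹ (rootPerm e x :: u)) (by rw [he.inv.1]; simp)
      have h : rootPerm e x :: u = rootPerm e y :: (e (y :: v)).tail := by
        rw [← he.apply_cons_eq_cons_tail, ← hyv, Equiv.Perm.coe_inv, Equiv.apply_symm_apply]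
      rw [List.cons.injEq] at h
      obtain rfl := (rootPerm e).injective h.1.symm
      exact ⟨v, h.2.symm⟩
  rw [sec, dif_pos hbij]
  rfl

theorem apply_cons (he : IsTreeAut e) (x : Fin k) (w : Word k) :
    e (x :: w) = rootPerm e x :: sec e x w := by
  rw [he.sec_apply]
  exact he.apply_cons_eq_cons_tail x w

theorem rootPerm_sec_eq (he : IsTreeAut e) {x y : Fin k}
    (h : ∀ w, e (x :: w) = y :: f w) : rootPerm e x = y ∧ sec e x = f := by
  have hw : ∀ w, rootPerm e x = y ∧ sec e x w = f w := fun w => by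
    simpa [he.apply_cons] using h w
  exact ⟨(hw []).1, Equiv.ext fun w => (hw w).2⟩

end IsTreeAut

theorem rootPerm_one : rootPerm (1 : Equiv.Perm (Word k)) = 1 :=
  Equiv.ext fun _ => (IsTreeAut.one.rootPerm_sec_eq (f := 1) fun _ => rfl).1

theorem sec_one (x : Fin k) : sec (1 : Equiv.Perm (Word k)) x = 1 :=
  (IsTreeAut.one.rootPerm_sec_eq (f := 1) fun _ => rfl).2

namespace IsTreeAut

variable {e f : Equiv.Perm (Word k)}

theorem rootPerm_mul (he : IsTreeAut e) (hf : IsTreeAut f) :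
    rootPerm (e * f) = rootPerm e * rootPerm f :=
  Equiv.ext fun x => ((he.mul hf).rootPerm_sec_eq (f := sec e (rootPerm f x) * sec f x)
    fun w => by rw [Equiv.Perm.mul_apply, hf.apply_cons, he.apply_cons]; rfl).1

theorem sec_mul (he : IsTreeAut e) (hf : IsTreeAut f) (x : Fin k) :
    sec (e * f) x = sec e (rootPerm f x) * sec f x :=
  ((he.mul hf).rootPerm_sec_eq (y := rootPerm e (rootPerm f x))
    fun w => by rw [Equiv.Perm.mul_apply, hf.apply_cons, he.apply_cons]; rfl).2

theorem rootPerm_inv (he : IsTreeAut e) : rootPerm e⁻¹ = (rootPerm e)⁻¹ :=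
  eq_inv_of_mul_eq_one_right (by rw [← he.rootPerm_mul he.inv, mul_inv_cancel, rootPerm_one])

theorem sec_inv (he : IsTreeAut e) (x : Fin k) :
    sec e⁻¹ x = (sec e ((rootPerm e)⁻¹ x))⁻¹ := by
  have h := he.sec_mul he.inv x
  rw [mul_inv_cancel, sec_one, he.rootPerm_inv] at h
  exact eq_inv_of_mul_eq_one_right h.symm

end IsTreeAut

theorem IsHanoiWith.inv {a : Equiv.Perm (Word k)} {Q : Set (Fin k)} (h : IsHanoiWith a Q) :
    IsHanoiWith a⁻¹ Q := by
  obtain ⟨ha, hactive, hinactive, hfix⟩ := h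
  have hfix_inv : ∀ j ∈ Q, (rootPerm a)⁻¹ j = j := fun j hj =>
    Equiv.Perm.inv_eq_iff_eq.mpr (hfix j hj).symm
  refine ⟨ha.inv, fun i hi => ?_, fun j hj => ?_, fun j hj => ?_⟩
  · have hi' : (rootPerm a)⁻¹ i ∉ Q := fun hQ => hi <| by
      have h : rootPerm a ((rootPerm a)⁻¹ i) = i := by simp
      rw [hfix _ hQ] at h
      rwa [h] at hQ
    rw [ha.sec_inv, hactive _ hi', inv_one]
  · rw [ha.sec_inv, hfix_inv j hj, hinactive j hj]
  · rw [ha.rootPerm_inv, hfix_inv j hj]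

theorem IsHanoiAut.inv {a : Equiv.Perm (Word k)} (h : IsHanoiAut a) : IsHanoiAut a⁻¹ :=
  let ⟨_, hQ⟩ := h
  ⟨_, hQ.inv⟩

theorem IsHanoiAut.isHanoiWith_inactivePegs {a : Equiv.Perm (Word k)} (h : IsHanoiAut a) :
    IsHanoiWith a (inactivePegs a) := by
  by_cases ha : a = 1
  · subst ha
    rw [inactivePegs, if_pos rfl]
    exact ⟨IsTreeAut.one, fun _ hi => absurd trivial hi, fun _ _ => sec_one _,
      fun _ _ => by rw [rootPerm_one]; rfl⟩
  · rw [inactivePegs, if_neg ha, dif_pos (show ∃ Q, IsHanoiWith a Q from h)]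
    exact h.choose_spec

section Representations

variable {S : Set (Equiv.Perm (Word k))} {L L' : List (Equiv.Perm (Word k))}
  {g : Equiv.Perm (Word k)}

theorem mem_essSet_cons {s : Equiv.Perm (Word k)} {x : Fin k} :
    x ∈ essSet (s :: L) ↔ x ∈ inactivePegs s ∧ x ∈ essSet L := by
  simp [essSet]

theorem essSet_subset_essSet (h : L' ⊆ L) : essSet L ⊆ essSet L' := by
  simp only [essSet, Set.subset_def, Set.mem_iInter]
  exact fun x hx s hs => hx s (h hs)

theorem sec_list_prod_of_mem_essSet (hL : ∀ s ∈ L, IsHanoiWith s (inactivePegs s))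
    {x : Fin k} (hx : x ∈ essSet L) : sec L.prod x = L.prod ∧ rootPerm L.prod x = x := by
  induction L with
  | nil => simp [sec_one, rootPerm_one]
  | cons s L ih =>
    rw [List.forall_mem_cons] at hL
    rw [mem_essSet_cons] at hx
    obtain ⟨hsec, hroot⟩ := ih hL.2 hx.2
    have hP := IsTreeAut.list_prod fun t ht => (hL.2 t ht).1
    rw [List.prod_cons, hL.1.1.sec_mul hP, hL.1.1.rootPerm_mul hP, Equiv.Perm.mul_apply, hroot,
      hsec, hL.1.2.2.1 x hx.1, hL.1.2.2.2 x hx.1]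
    exact ⟨rfl, rfl⟩

theorem exists_sublist_prod_eq_sec (hL : ∀ s ∈ L, IsHanoiWith s (inactivePegs s)) (x : Fin k) :
    ∃ L', L'.Sublist L ∧ L'.prod = sec L.prod x ∧ (L' = L → x ∈ essSet L) := by
  induction L with
  | nil => exact ⟨[], .slnil, by simp [sec_one], fun _ => by simp [essSet]⟩
  | cons s L ih =>
    rw [List.forall_mem_cons] at hL
    obtain ⟨hs, hLH⟩ := hL
    obtain ⟨L₀, hsub, hprod, hess⟩ := ih hLH
    have hP := IsTreeAut.list_prod fun t ht => (hLH t ht).1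
    have hsec : sec (s * L.prod) x = sec s (rootPerm L.prod x) * L₀.prod := by
      rw [hs.1.sec_mul hP, hprod]
    by_cases hy : rootPerm L.prod x ∈ inactivePegs s
    · refine ⟨s :: L₀, hsub.cons_cons s, ?_, fun h => ?_⟩
      · rw [List.prod_cons, List.prod_cons, hsec, hs.2.2.1 _ hy]
      · have hxL := hess (List.cons.inj h).2
        rw [(sec_list_prod_of_mem_essSet hLH hxL).2] at hy
        exact mem_essSet_cons.mpr ⟨hy, hxL⟩
    · refine ⟨L₀, hsub.cons s, ?_, fun h => ?_⟩
      · rw [List.prod_cons, hsec, hs.2.1 _ hy, one_mul]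
      · subst h
        exact absurd hsub.length_le (by simp)

theorem IsRepOf.isHanoiWith_inactivePegs (hS : ∀ a ∈ S, IsHanoiAut a) (hL : IsRepOf S L g) :
    ∀ s ∈ L, IsHanoiWith s (inactivePegs s) := fun s hs => by
  rcases hL.1 s hs with h | h
  · exact (hS s h).isHanoiWith_inactivePegs
  · simpa using (hS _ h).inv.isHanoiWith_inactivePegs

theorem IsRepOf.prod_of_sublist (hL : IsRepOf S L g) (h : L'.Sublist L) : IsRepOf S L' L'.prod :=
  ⟨fun s hs => hL.1 s (h.subset hs), rfl⟩

theorem mem_closure_iff_exists_isRepOf : g ∈ Subgroup.closure S ↔ ∃ L, IsRepOf S L g := by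
  rw [← Subgroup.mem_toSubmonoid, Subgroup.closure_toSubmonoid, ← SetLike.mem_coe,
    Submonoid.closure_eq_image_prod]
  simp [IsRepOf, Set.mem_inv]

theorem exists_minimal_isRepOf (hg : g ∈ Subgroup.closure S) :
    ∃ L, IsRepOf S L g ∧ ∀ L', IsRepOf S L' g → L.length ≤ L'.length := by
  obtain ⟨L, hL, hmin⟩ := (measure (List.length (α := Equiv.Perm (Word k)))).wf.has_min
    {L | IsRepOf S L g} (mem_closure_iff_exists_isRepOf.mp hg)
  exact ⟨L, hL, fun L' hL' => not_lt.mp (hmin L' hL')⟩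

theorem IsRepOf.sec_eq_self (hS : ∀ a ∈ S, IsHanoiAut a) (hL : IsRepOf S L g) {j : Fin k}
    (hj : j ∈ essSet L) : sec g j = g :=
  hL.2 ▸ (sec_list_prod_of_mem_essSet (hL.isHanoiWith_inactivePegs hS) hj).1

theorem IsRepOf.mem_essSet_of_minimal (hS : ∀ a ∈ S, IsHanoiAut a) (hL : IsRepOf S L g)
    (hmin : ∀ L', IsRepOf S L' g → L.length ≤ L'.length) {j : Fin k} (hj : sec g j = g) :
    j ∈ essSet L := by
  obtain ⟨L', hsub, hprod, hess⟩ :=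
    exists_sublist_prod_eq_sec (hL.isHanoiWith_inactivePegs hS) j
  have hL' := hL.prod_of_sublist hsub
  rw [hprod, hL.2, hj] at hL'
  exact hess (hsub.eq_of_length_le (hmin L' hL'))

theorem sec_mem_preNucleus (hS : ∀ a ∈ S, IsHanoiAut a)
    (hg : g ∈ preNucleus (Subgroup.closure S)) (j : Fin k) :
    sec g j ∈ preNucleus (Subgroup.closure S) := by
  obtain ⟨hgG, i, hi⟩ := hg
  obtain ⟨L, hL, hmin⟩ := exists_minimal_isRepOf hgG
  obtain ⟨L', hsub, hprod, -⟩ := exists_sublist_prod_eq_sec (hL.isHanoiWith_inactivePegs hS) j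
  have hL' := hL.prod_of_sublist hsub
  rw [hprod, hL.2] at hL'
  have hi' : i ∈ essSet L' :=
    essSet_subset_essSet hsub.subset (hL.mem_essSet_of_minimal hS hmin hi)
  exact ⟨mem_closure_iff_exists_isRepOf.mpr ⟨L', hL'⟩, i, hL'.sec_eq_self hS hi'⟩

end Representations

theorem prenucleus_characterization_general {k : ℕ} (S : Set (Equiv.Perm (Word k)))
    (hS : ∀ a ∈ S, IsHanoiAut a)
    (g : Equiv.Perm (Word k)) (hg : g ∈ Subgroup.closure S) :
    ((∃ j : Fin k, sec g j = g) ↔ ∃ L, IsRepOf S L g ∧ (essSet L).Nonempty) ∧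
    ((∃ j : Fin k, sec g j = g) ↔
      ∀ L, IsRepOf S L g → (∀ L', IsRepOf S L' g → L.length ≤ L'.length) →
        (essSet L).Nonempty) ∧
    (g ∈ preNucleus (Subgroup.closure S) →
      ∀ j : Fin k, sec g j ∈ preNucleus (Subgroup.closure S)) := by
  have fix_of_rep : (∃ L, IsRepOf S L g ∧ (essSet L).Nonempty) → ∃ j, sec g j = g :=
    fun ⟨_, hL, j, hj⟩ => ⟨j, hL.sec_eq_self hS hj⟩
  have minimal_of_fix : (∃ j, sec g j = g) → ∀ L, IsRepOf S L g →
      (∀ L', IsRepOf S L' g → L.length ≤ L'.length) → (essSet L).Nonempty :=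
    fun ⟨j, hj⟩ _ hL hmin => ⟨j, hL.mem_essSet_of_minimal hS hmin hj⟩
  obtain ⟨L, hL, hmin⟩ := exists_minimal_isRepOf hg
  exact ⟨⟨fun h => ⟨L, hL, minimal_of_fix h L hL hmin⟩, fix_of_rep⟩,
    ⟨minimal_of_fix, fun h => fix_of_rep ⟨L, hL, h L hL hmin⟩⟩,
    fun hg' j => sec_mem_preNucleus hS hg' j⟩

/-- Proposition: characterizations of the prenucleus.
For `g` in a `k`-peg Hanoi group `G` generated by `S`, the following are
equivalent: (1) `g|_j = g` for some letter `j`; (2) some representation of `g`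
has nonempty essential set; (3) every minimal representation of `g` has
nonempty essential set.  Moreover the prenucleus of `G` is state-closed. -/
theorem prenucleus_characterization {k : ℕ} (S : Set (Equiv.Perm (Word k)))
    (hS1 : (1 : Equiv.Perm (Word k)) ∈ S) (hS : ∀ a ∈ S, IsHanoiAut a)
    (g : Equiv.Perm (Word k)) (hg : g ∈ Subgroup.closure S) :
    ((∃ j : Fin k, sec g j = g) ↔ ∃ L, IsRepOf S L g ∧ (essSet L).Nonempty) ∧
    ((∃ j : Fin k, sec g j = g) ↔
      ∀ L, IsRepOf S L g → (∀ L', IsRepOf S L' g → L.length ≤ L'.length) →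
        (essSet L).Nonempty) ∧
    (g ∈ preNucleus (Subgroup.closure S) →
      ∀ j : Fin k, sec g j ∈ preNucleus (Subgroup.closure S)) :=
  prenucleus_characterization_general S hS g hg

end Hanoi
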